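/- (Lemma 6, second part: T_GSJ maps V_GSJ into V.) For every v ∈ ℝ^S with T_GSJ v ≤ v, the vector u = T_GSJ v satisfies Tu ≤ u; that is, T_GSJ(V_GSJ) ⊆ V. -/

import Mathlib

noncomputable def Tval {S : Type*} [Fintype S] {A : S → Type*}
    [∀ i, Fintype (A i)] [∀ i, Nonempty (A i)]
    (r : ∀ i, A i → ℝ) (p : ∀ i, A i → S → ℝ) (lam : ℝ) (v : S → ℝ) (i : S) : ℝ :=
  Finset.univ.sup' Finset.univ_nonempty fun a : A i =>
    r i a + lam * ∑ j, p i a j * v j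

noncomputable def TGSJ {S : Type*} [Fintype S] [LinearOrder S] {A : S → Type*}
    [∀ i, Fintype (A i)] [∀ i, Nonempty (A i)]
    (r : ∀ i, A i → ℝ) (p : ∀ i, A i → S → ℝ) (lam : ℝ) (v : S → ℝ) (i : S) : ℝ :=
  Finset.univ.sup' Finset.univ_nonempty fun a : A i =>
    (r i a + lam * (∑ j ∈ (Finset.univ.filter fun j => j < i).attach,
        p i a j.1 * TGSJ r p lam v j.1)
      + lam * ∑ j ∈ Finset.univ.filter fun j => i < j, p i a j * v j) /
      (1 - lam * p i a i)
termination_by (Finset.univ.filter fun j => j < i).card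
decreasing_by
  have hj : j.1 < i := (Finset.mem_filter.mp j.2).2
  apply Finset.card_lt_card
  rw [Finset.ssubset_iff_of_subset]
  · exact ⟨j.1, Finset.mem_filter.mpr ⟨Finset.mem_univ _, hj⟩, by simp⟩
  · intro x hx
    exact Finset.mem_filter.mpr ⟨Finset.mem_univ _, (Finset.mem_filter.mp hx).2.trans hj⟩

/-!
Write `u = T_GSJ v`. Clearing the positive denominator `1 - λ pᵢᵢ(a)` in the defining maximum,
`u ≤ v` lets one replace `v` by `u` in the terms `j > i`, which turns each Gauss–Seidel–Jacobi
inequality at state `i` into the Bellman inequality `r(i,a) + λ Σⱼ pᵢⱼ(a) uⱼ ≤ uᵢ`.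
-/

open Finset

theorem Finset.sum_univ_eq_sum_lt_add_add_sum_gt {S M : Type*} [Fintype S] [LinearOrder S]
    [AddCommMonoid M] (i : S) (f : S → M) :
    ∑ j, f j = (∑ j ∈ univ.filter (· < i), f j) + f i + ∑ j ∈ univ.filter (i < ·), f j := by
  have hnot_lt : univ.filter (fun j => ¬ j < i) = insert i (univ.filter (i < ·)) := by
    ext j
    simp [not_lt, le_iff_eq_or_lt, eq_comm]
  rw [← sum_filter_add_sum_filter_not univ (· < i), hnot_lt, sum_insert (by simp), add_assoc]

section GaussSeidelJacobi

variable {S : Type*} [Fintype S] [LinearOrder S] {A : S → Type*}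
  [∀ i, Fintype (A i)] [∀ i, Nonempty (A i)]
  (r : ∀ i, A i → ℝ) (p : ∀ i, A i → S → ℝ) (lam : ℝ)

theorem le_TGSJ (v : S → ℝ) (i : S) (a : A i) :
    (r i a + lam * (∑ j ∈ univ.filter (· < i), p i a j * TGSJ r p lam v j)
      + lam * ∑ j ∈ univ.filter (i < ·), p i a j * v j) / (1 - lam * p i a i)
      ≤ TGSJ r p lam v i := by
  rw [← sum_attach (univ.filter (· < i)) (fun j => p i a j * TGSJ r p lam v j)]
  conv_rhs => rw [TGSJ]
  apply le_sup' _ (mem_univ a)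

theorem bellman_le_TGSJ_of_TGSJ_le (hp : ∀ i (a : A i) (j : S), 0 ≤ p i a j) (hlam0 : 0 ≤ lam)
    {v : S → ℝ} (hv : ∀ j, TGSJ r p lam v j ≤ v j) {i : S} (a : A i)
    (hden : 0 < 1 - lam * p i a i) :
    r i a + lam * ∑ j, p i a j * TGSJ r p lam v j ≤ TGSJ r p lam v i := by
  set u := TGSJ r p lam v
  have hgsj := (div_le_iff₀ hden).mp (le_TGSJ r p lam v i a)
  have hupper : ∑ j ∈ univ.filter (i < ·), p i a j * u j
      ≤ ∑ j ∈ univ.filter (i < ·), p i a j * v j :=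
    sum_le_sum fun j _ => mul_le_mul_of_nonneg_left (hv j) (hp i a j)
  rw [sum_univ_eq_sum_lt_add_add_sum_gt i]
  nlinarith [mul_le_mul_of_nonneg_left hupper hlam0]

end GaussSeidelJacobi

theorem TGSJ_maps_VGSJ_into_V_general {S : Type*} [Fintype S] [LinearOrder S] {A : S → Type*}
    [∀ i, Fintype (A i)] [∀ i, Nonempty (A i)]
    (r : ∀ i, A i → ℝ) (p : ∀ i, A i → S → ℝ) (lam : ℝ)
    (hp : ∀ i (a : A i) (j : S), 0 ≤ p i a j)
    (hp1 : ∀ i (a : A i), ∑ j, p i a j = 1)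
    (hlam0 : 0 ≤ lam) (hlam1 : lam < 1) :
    ∀ v : S → ℝ, (∀ i, TGSJ r p lam v i ≤ v i) →
      ∀ i, Tval r p lam (TGSJ r p lam v) i ≤ TGSJ r p lam v i := by
  intro v hv i
  refine sup'_le _ _ fun a _ => bellman_le_TGSJ_of_TGSJ_le r p lam hp hlam0 hv a ?_
  have hpii : p i a i ≤ 1 :=
    (single_le_sum (fun j _ => hp i a j) (mem_univ i)).trans (hp1 i a).le
  nlinarith [hp i a i]

theorem TGSJ_maps_VGSJ_into_V {S : Type*} [Fintype S] [Nonempty S] [LinearOrder S] {A : S → Type*}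
    [∀ i, Fintype (A i)] [∀ i, Nonempty (A i)]
    (r : ∀ i, A i → ℝ) (p : ∀ i, A i → S → ℝ) (lam : ℝ)
    (hp : ∀ i (a : A i) (j : S), 0 ≤ p i a j)
    (hp1 : ∀ i (a : A i), ∑ j, p i a j = 1)
    (hlam0 : 0 ≤ lam) (hlam1 : lam < 1) :
    ∀ v : S → ℝ, (∀ i, TGSJ r p lam v i ≤ v i) →
      ∀ i, Tval r p lam (TGSJ r p lam v) i ≤ TGSJ r p lam v i :=
  TGSJ_maps_VGSJ_into_V_general r p lam hp hp1 hlam0 hlam1
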